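/- arXiv:2307.16047 — 2 statements merged into one kernel-verified Lean document; each statement's English description precedes it below -/
import Mathlib

section
/- For a subset X of ω₁ with the subspace topology, the following are equivalent: (1) X is nonstationary; (2) X is a Q-space; (3) X is a Δ-space. -/
noncomputable def omega1 : Ordinal := (Cardinal.aleph 1).ord

/-- `C` is a club (closed unbounded set) in `ω₁`. -/
def IsClubInOmega1 (C : Set Ordinal) : Prop :=
  C ⊆ Set.Iio omega1 ∧
  (∀ o < omega1, ∃ c ∈ C, o ≤ c) ∧
  (∀ o, o < omega1 → Order.IsSuccLimit o → (∀ p < o, ∃ c ∈ C, p < c ∧ c < o) → o ∈ C)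

/-- `S ⊆ ω₁` is stationary: it meets every club in `ω₁`. -/
def IsStationaryInOmega1 (S : Set Ordinal) : Prop :=
  S ⊆ Set.Iio omega1 ∧ ∀ C, IsClubInOmega1 C → (S ∩ C).Nonempty

/-- A topological space is a Δ-space if every decreasing sequence of subsets with
empty intersection has a decreasing open expansion with empty intersection. -/
def IsDeltaSpace (X : Type*) [TopologicalSpace X] : Prop :=
  ∀ D : ℕ → Set X, (∀ n, D (n + 1) ⊆ D n) → (⋂ n, D n) = ∅ →
    ∃ V : ℕ → Set X, (∀ n, IsOpen (V n)) ∧ (∀ n, V (n + 1) ⊆ V n) ∧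
      (∀ n, D n ⊆ V n) ∧ (⋂ n, V n) = ∅

/-!
If `X` misses a club `C`, then `x ↦ C ∩ Iio x` is locally constant on `X` and its fibres are
countable (each lies below some point of `C`), so `X` is a topological sum of countable `T₁`
spaces and every subset of `X` is Gδ. A Q-space is a Δ-space: write `D n = ⋂ m, U n m` and take
`V n = ⋂ i ≤ n, ⋂ j ≤ n, U i j`. Conversely, if `X` is stationary, an Ulam matrix splits it into
pairwise disjoint stationary sets `S k`. The tails `D n = ⋃ k ≥ n, S k` have empty intersection;
for an open expansion `V`, the relatively closed set `X \ V n` misses the stationary set `S n`,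
so it is nonstationary (a closed set with stationary trace contains a club). As these sets cover
`X`, `X` would be nonstationary.
-/

open Cardinal Ordinal Order Set Filter Function Topology Set.Notation

universe u

theorem omega1_eq_omega_one : omega1.{u} = ω₁ := ord_aleph 1

theorem countable_Iio_of_lt_omega1 {β : Ordinal.{u}} (hβ : β < omega1) : (Iio β).Countable := by
  rwa [← le_aleph0_iff_set_countable, Cardinal.mk_Iio_ordinal, lift_le_aleph0,
    ← lt_aleph_one_iff, ← lt_ord]

theorem not_countable_Iio_omega1 : ¬ (Iio omega1.{u}).Countable := by
  rw [← le_aleph0_iff_set_countable, Cardinal.mk_Iio_ordinal, lift_le_aleph0, omega1, card_ord]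
  simp

theorem cof_Iio_omega1_ne_aleph0 : Order.cof (Iio omega1.{u}) ≠ ℵ₀ := by
  simpa [omega1_eq_omega_one] using aleph0_lt_aleph_one.ne'

theorem isLUB_image_val_Iio {α : Type*} [LinearOrder α] {o : α} {d : Set (Iio o)} {a : Iio o}
    (h : IsLUB d a) : IsLUB (Subtype.val '' d) a.1 := by
  refine ⟨by rintro _ ⟨y, hy, rfl⟩; exact h.1 hy, fun b hb => le_of_not_gt fun hba => ?_⟩
  exact hba.not_ge (h.2 (show (⟨b, hba.trans a.2⟩ : Iio o) ∈ upperBounds d from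
    fun y hy => hb ⟨y, hy, rfl⟩))

theorem isClubInOmega1_iff {C : Set Ordinal.{u}} :
    IsClubInOmega1 C ↔ C ⊆ Iio omega1 ∧ IsClub (Iio omega1 ↓∩ C) := by
  refine ⟨fun ⟨hC, hunb, hcl⟩ => ⟨hC, ⟨?_, fun a => ?_⟩⟩, fun ⟨hC, hcl, hunb⟩ => ⟨hC, ?_, ?_⟩⟩
  · rw [dirSupClosed_iff_of_linearOrder]
    intro d hd hne a ha
    have ha' := isLUB_image_val_Iio ha
    by_cases had : a.1 ∈ Subtype.val '' d
    · obtain ⟨y, hy, hya⟩ := had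
      rw [← Subtype.ext hya]
      exact hd hy
    refine hcl a.1 a.2 (ha'.isSuccLimit_of_notMem (hne.image _) had) fun p hp => ?_
    obtain ⟨_, ⟨y, hy, rfl⟩, hpy, hya⟩ := ha'.exists_between hp
    exact ⟨y, hd hy, hpy, hya.lt_of_ne fun h => had ⟨y, hy, h⟩⟩
  · obtain ⟨c, hc, hac⟩ := hunb a.1 a.2
    exact ⟨⟨c, hC hc⟩, hc, hac⟩
  · intro o ho
    obtain ⟨c, hc, hoc⟩ := hunb ⟨o, ho⟩
    exact ⟨c, hc, hoc⟩
  · intro o ho hlim hcof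
    rw [dirSupClosed_iff_of_linearOrder] at hcl
    refine hcl (d := {y | y.1 ∈ C ∧ y.1 < o}) (fun y hy => hy.1) ?_ (a := ⟨o, ho⟩) ⟨?_, ?_⟩
    · obtain ⟨c, hc, -, hco⟩ := hcof 0 hlim.bot_lt
      exact ⟨⟨c, hco.trans ho⟩, hc, hco⟩
    · exact fun y hy => hy.2.le
    · intro b hb
      by_contra! hbo
      obtain ⟨c, hc, hbc, hco⟩ := hcof b.1 hbo
      exact (hb (a := ⟨c, hco.trans ho⟩) ⟨hc, hco⟩).not_gt hbc

theorem isStationaryInOmega1_iff {S : Set Ordinal.{u}} (hS : S ⊆ Iio omega1) :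
    IsStationaryInOmega1 S ↔ IsStationary (Iio omega1 ↓∩ S) := by
  refine ⟨fun h t ht => ?_, fun h => ⟨hS, fun C hC => ?_⟩⟩
  · have hclub : IsClubInOmega1 (Subtype.val '' t) := by
      rw [isClubInOmega1_iff, preimage_image_eq _ Subtype.val_injective]
      exact ⟨by rintro _ ⟨y, -, rfl⟩; exact y.2, ht⟩
    obtain ⟨_, hxS, y, hy, rfl⟩ := h.2 _ hclub
    exact ⟨y, hxS, hy⟩
  · obtain ⟨y, hyS, hyC⟩ := h (isClubInOmega1_iff.1 hC).2
    exact ⟨y, hyS, hyC⟩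

theorem IsStationaryInOmega1.exists_of_iUnion {S : ℕ → Set Ordinal.{u}}
    (h : IsStationaryInOmega1 (⋃ n, S n)) : ∃ n, IsStationaryInOmega1 (S n) := by
  have hS : ∀ n, S n ⊆ Iio omega1 := fun n => (subset_iUnion S n).trans h.1
  rw [isStationaryInOmega1_iff h.1, preimage_iUnion,
    isStationary_iUnion_iff_of_countable cof_Iio_omega1_ne_aleph0] at h
  obtain ⟨n, hn⟩ := h
  exact ⟨n, (isStationaryInOmega1_iff (hS n)).2 hn⟩

theorem isClubInOmega1_Iio : IsClubInOmega1 (Iio omega1.{u}) :=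
  ⟨subset_rfl, fun o ho => ⟨o, ho, le_rfl⟩, fun _ ho _ _ => ho⟩

theorem IsClubInOmega1.inter_Ioi {C : Set Ordinal.{u}} (hC : IsClubInOmega1 C) {o : Ordinal}
    (ho : o < omega1) : IsClubInOmega1 (C ∩ Ioi o) := by
  obtain ⟨hsub, hunb, hcl⟩ := hC
  have hlim : IsSuccLimit omega1.{u} := omega1_eq_omega_one ▸ isSuccLimit_omega 1
  refine ⟨inter_subset_left.trans hsub, fun p hp => ?_, fun q hq hq' hcof => ?_⟩
  · obtain ⟨c, hc, hpc⟩ := hunb (max p (o + 1)) (max_lt hp (hlim.add_one_lt ho))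
    exact ⟨c, ⟨hc, (lt_add_one o).trans_le ((le_max_right _ _).trans hpc)⟩,
      (le_max_left _ _).trans hpc⟩
  · obtain ⟨c, hc, -, hcq⟩ := hcof 0 hq'.bot_lt
    exact ⟨hcl q hq hq' fun p hp => (hcof p hp).imp fun c hc => ⟨hc.1.1, hc.2⟩, hc.2.trans hcq⟩

theorem IsStationaryInOmega1.inter_Ioi {S : Set Ordinal.{u}} (hS : IsStationaryInOmega1 S)
    {o : Ordinal} (ho : o < omega1) : IsStationaryInOmega1 (S ∩ Ioi o) := by
  refine ⟨inter_subset_left.trans hS.1, fun C hC => ?_⟩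
  obtain ⟨x, hxS, hxC, hxo⟩ := hS.2 _ (hC.inter_Ioi ho)
  exact ⟨x, ⟨hxS, hxo⟩, hxC⟩

theorem IsStationaryInOmega1.isClubInOmega1_inter_Iio {S K : Set Ordinal.{u}}
    (hS : IsStationaryInOmega1 S) (hSK : S ⊆ K) (hK : IsClosed K) :
    IsClubInOmega1 (K ∩ Iio omega1) := by
  refine ⟨inter_subset_right, fun o ho => ?_, fun o ho hlim hcof => ⟨?_, ho⟩⟩
  · obtain ⟨x, hxS, hx, hox⟩ := hS.2 _ (isClubInOmega1_Iio.inter_Ioi ho)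
    exact ⟨x, ⟨hSK hxS, hx⟩, hox.le⟩
  · have hlub : IsLUB (K ∩ Iio o) o := ⟨fun c hc => hc.2.le, fun b hb => le_of_not_gt fun hbo => by
      obtain ⟨c, hc, hbc, hco⟩ := hcof b hbo
      exact (hb ⟨hc.1, hco⟩).not_gt hbc⟩
    obtain ⟨c, hc, -, hco⟩ := hcof 0 hlim.bot_lt
    exact hK.closure_subset (closure_mono inter_subset_left (hlub.mem_closure ⟨c, hc.1, hco⟩))

theorem exists_injOn_Iio :
    ∃ g : Ordinal.{u} → Ordinal.{u} → ℕ, ∀ β < omega1, InjOn (g β) (Iio β) := by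
  have h : ∀ β : Ordinal.{u}, ∃ f : Ordinal.{u} → ℕ, β < omega1 → InjOn f (Iio β) := fun β =>
    if hβ : β < omega1 then
      (countable_iff_exists_injOn.1 (countable_Iio_of_lt_omega1 hβ)).imp fun _ hf _ => hf
    else ⟨0, fun h => absurd h hβ⟩
  choose g hg using h
  exact ⟨g, hg⟩

theorem exists_infinite_fiber_Iio_omega1 (N : Ordinal.{u} → ℕ) :
    ∃ n, (Iio omega1 ∩ N ⁻¹' {n}).Infinite := by
  by_contra! h
  refine not_countable_Iio_omega1 ?_
  have hcover : Iio omega1.{u} = ⋃ n, Iio omega1 ∩ N ⁻¹' {n} := by ext; simp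
  rw [hcover]
  exact countable_iUnion fun n => (h n).countable

theorem IsStationaryInOmega1.exists_pairwise_disjoint {X : Set Ordinal.{u}}
    (hX : IsStationaryInOmega1 X) : ∃ S : ℕ → Set Ordinal.{u},
      Pairwise (Disjoint on S) ∧ ∀ k, S k ⊆ X ∧ IsStationaryInOmega1 (S k) := by
  obtain ⟨g, hg⟩ := exists_injOn_Iio.{u}
  -- Ulam matrix: rows `Y n` consist of pairwise disjoint sets since `g β` is injective below `β`,
  -- and each column `δ` covers `X ∩ Ioi δ`.
  let Y : ℕ → Ordinal.{u} → Set Ordinal.{u} := fun n δ => {β ∈ X | δ < β ∧ g β δ = n}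
  have hY : ∀ δ < omega1, ∃ n, IsStationaryInOmega1 (Y n δ) := fun δ hδ => by
    have hcover : X ∩ Ioi δ = ⋃ n, Y n δ := by ext; simp +contextual [Y]
    exact (hcover ▸ hX.inter_Ioi hδ).exists_of_iUnion
  choose! N hN using hY
  obtain ⟨n, hn⟩ := exists_infinite_fiber_Iio_omega1 N
  let δ : ℕ ↪ ↥(Iio omega1 ∩ N ⁻¹' {n}) := hn.natEmbedding
  refine ⟨fun k => Y n (δ k), fun k l hkl => ?_, fun k => ⟨fun β hβ => hβ.1, ?_⟩⟩
  · refine disjoint_left.2 fun β ⟨hβX, hkβ, hk⟩ ⟨_, hlβ, hl⟩ => hkl (δ.injective ?_)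
    exact Subtype.ext (hg β (hX.1 hβX) hkβ hlβ (hk.trans hl.symm))
  · obtain ⟨hδk, hNk⟩ := (δ k).2
    rw [mem_preimage, mem_singleton_iff] at hNk
    simpa only [hNk] using hN _ hδk

theorem not_isDeltaSpace_of_isStationary {X : Set Ordinal.{u}} (hX : IsStationaryInOmega1 X) :
    ¬ IsDeltaSpace X := by
  intro hΔ
  obtain ⟨S, hdisj, hS⟩ := hX.exists_pairwise_disjoint
  let D : ℕ → Set X := fun n => {x | ∃ k ≥ n, x.1 ∈ S k}
  have hD : ⋂ n, D n = ∅ := by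
    refine eq_empty_of_forall_notMem fun x hx => ?_
    obtain ⟨k, -, hk⟩ := mem_iInter.1 hx 0
    obtain ⟨l, hl, hl'⟩ := mem_iInter.1 hx (k + 1)
    exact disjoint_left.1 (hdisj (show k ≠ l by omega)) hk hl'
  obtain ⟨V, hVo, -, hDV, hV⟩ :=
    hΔ D (fun n x ⟨k, hk, hx⟩ => ⟨k, by omega, hx⟩) hD
  choose K hK hKV using fun n => isClosed_induced_iff.1 (hVo n).isClosed_compl
  have hcover : X = ⋃ n, X ∩ K n := by
    refine (iUnion_subset fun n => inter_subset_left).antisymm' fun x hx => ?_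
    obtain ⟨n, hn⟩ : ∃ n, (⟨x, hx⟩ : X) ∉ V n := by
      by_contra! h
      exact notMem_empty _ (hV ▸ mem_iInter.2 h)
    exact mem_iUnion.2 ⟨n, hx, (hKV n ▸ hn : (⟨x, hx⟩ : X) ∈ Subtype.val ⁻¹' K n)⟩
  obtain ⟨n, hn⟩ := (hcover ▸ hX).exists_of_iUnion
  obtain ⟨x, hxS, hxK, -⟩ :=
    (hS n).2.2 _ (hn.isClubInOmega1_inter_Iio inter_subset_right (hK n))
  have hxV : (⟨x, (hS n).1 hxS⟩ : X) ∈ V n := hDV n ⟨n, le_rfl, hxS⟩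
  exact (hKV n ▸ hxK : (⟨x, (hS n).1 hxS⟩ : X) ∈ (V n)ᶜ) hxV

theorem isGδ_of_isLocallyConstant {Y β : Type*} [TopologicalSpace Y] [T1Space Y] {f : Y → β}
    (hf : IsLocallyConstant f) (hfib : ∀ b, (f ⁻¹' {b}).Countable) (A : Set Y) : IsGδ A := by
  choose U hUo hU using fun b =>
    isGδ_iff_eq_iInter_nat.1 ((hfib b).mono (sdiff_subset (t := A))).isGδ_compl
  have hmem : ∀ n y, y ∈ ⋃ b, f ⁻¹' {b} ∩ U b n ↔ y ∈ U (f y) n := by simp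
  rw [isGδ_iff_eq_iInter_nat]
  refine ⟨fun n => ⋃ b, f ⁻¹' {b} ∩ U b n,
    fun n => isOpen_iUnion fun b => (hf.isOpen_fiber b).inter (hUo b n), ?_⟩
  ext y
  simp_rw [mem_iInter, hmem, ← mem_iInter, ← hU]
  simp

theorem IsClubInOmega1.eventually_inter_Iio_eq {C : Set Ordinal.{u}} (hC : IsClubInOmega1 C)
    {x : Ordinal} (hx : x < omega1) (hxC : x ∉ C) : ∀ᶠ y in 𝓝 x, C ∩ Iio y = C ∩ Iio x := by
  by_cases hlim : IsSuccLimit x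
  · obtain ⟨a, hax, ha⟩ : ∃ a < x, ∀ c ∈ C, a < c → x ≤ c := by
      by_contra! h
      exact hxC (hC.2.2 x hx hlim h)
    filter_upwards [Ioo_mem_nhds hax (lt_add_one x)] with y ⟨hay, hyx⟩
    rw [lt_add_one_iff] at hyx
    ext c
    refine and_congr_right fun hc => ⟨fun hcy => hcy.trans_le hyx, fun hcx => ?_⟩
    exact (le_of_not_gt fun hac => (ha c hc hac).not_gt hcx).trans_lt hay
  · rw [SuccOrder.nhds_eq_pure.2 hlim]
    exact eventually_pure.2 rfl

theorem IsClubInOmega1.countable_setOf_inter_Iio_eq {C : Set Ordinal.{u}}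
    (hC : IsClubInOmega1 C) (b : Set Ordinal) :
    {x | x < omega1 ∧ x ∉ C ∧ C ∩ Iio x = b}.Countable := by
  rcases eq_empty_or_nonempty {x | x < omega1 ∧ x ∉ C ∧ C ∩ Iio x = b} with h | ⟨x, hx, hxC, rfl⟩
  · rw [h]
    exact countable_empty
  obtain ⟨c, hc, hxc⟩ := hC.2.1 x hx
  refine (countable_Iio_of_lt_omega1 (hC.1 hc)).mono fun y ⟨_, hyC, hy⟩ => ?_
  refine lt_of_le_of_ne (le_of_not_gt fun hcy => ?_) (ne_of_mem_of_not_mem hc hyC).symm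
  exact (hy ▸ ⟨hc, hcy⟩ : c ∈ C ∩ Iio x).2.not_ge hxc

theorem isGδ_of_not_isStationary {X : Set Ordinal.{u}} (hX : X ⊆ Iio omega1)
    (hns : ¬ IsStationaryInOmega1 X) (A : Set X) : IsGδ A := by
  obtain ⟨C, hC, hXC⟩ : ∃ C, IsClubInOmega1 C ∧ Disjoint X C := by
    simpa [IsStationaryInOmega1, hX, not_nonempty_iff_eq_empty, disjoint_iff] using hns
  have hxC : ∀ x : X, x.1 ∉ C := fun x => disjoint_left.1 hXC x.2
  refine isGδ_of_isLocallyConstant (f := fun x : X => C ∩ Iio x.1) ?_ (fun b => ?_) A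
  · rw [IsLocallyConstant.iff_eventually_eq]
    exact fun x => (continuous_subtype_val.tendsto x).eventually
      (hC.eventually_inter_Iio_eq (hX x.2) (hxC x))
  · refine ((hC.countable_setOf_inter_Iio_eq b).preimage Subtype.val_injective).mono ?_
    exact fun x hx => ⟨hX x.2, hxC x, hx⟩

theorem isDeltaSpace_of_forall_isGδ {Y : Type*} [TopologicalSpace Y] (h : ∀ A : Set Y, IsGδ A) :
    IsDeltaSpace Y := by
  intro D hD hDempty
  have hanti : Antitone D := antitone_nat_of_succ_le hD
  choose U hUo hU using fun n => isGδ_iff_eq_iInter_nat.1 (h (D n))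
  refine ⟨fun n => ⋂ i ≤ n, ⋂ j ≤ n, U i j,
    fun n => (finite_le_nat n).isOpen_biInter fun i _ =>
      (finite_le_nat n).isOpen_biInter fun j _ => hUo i j,
    fun n y hy => ?_, fun n y hy => ?_, eq_empty_of_forall_notMem fun y hy => ?_⟩
  · simp only [mem_iInter] at hy ⊢
    exact fun i hi j hj => hy i (by omega) j (by omega)
  · simp only [mem_iInter]
    intro i hi j _
    exact mem_iInter.1 (hU i ▸ hanti hi hy) j
  · suffices y ∈ ⋂ n, D n by rwa [hDempty] at this
    simp only [mem_iInter] at hy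
    refine mem_iInter.2 fun i => ?_
    rw [hU i, mem_iInter]
    exact fun j => hy (max i j) i (le_max_left i j) j (le_max_right i j)

/-- For `X ⊆ ω₁` the following are equivalent: `X` is nonstationary, `X` is a
Q-space, and `X` is a Δ-space. -/
theorem nonstationary_tfae (X : Set Ordinal) (hX : X ⊆ Set.Iio omega1) :
    List.TFAE [¬ IsStationaryInOmega1 X,
      ∀ A : Set X, IsGδ A,
      IsDeltaSpace X] := by
  tfae_have 1 → 2 := isGδ_of_not_isStationary hX
  tfae_have 2 → 3 := isDeltaSpace_of_forall_isGδ
  tfae_have 3 → 1 := fun hΔ hstat => not_isDeltaSpace_of_isStationary hstat hΔ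
  tfae_finish
end

section
/- If X is a topological space and every point of X has a neighborhood base of sets that are compact (X locally compact), and X is countably compact or compact, and X is a Δ-space, then X has no subset homeomorphic to a Souslin line; in particular, a Souslin line is not a Δ-space because a Souslin line is a Baire space partitioned into countably many dense subsets. -/
universe u v

/-- A Souslin line: a complete dense linear order without endpoints which, with
its order topology, is ccc but not separable. -/
def IsSouslinLine (L : Type*) [LinearOrder L] [TopologicalSpace L]
    [OrderTopology L] : Prop :=
  DenselyOrdered L ∧ NoMinOrder L ∧ NoMaxOrder L ∧
  (∀ S : Set L, S.Nonempty → BddAbove S → ∃ x, IsLUB S x) ∧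
  (∀ 𝒰 : Set (Set L), (∀ U ∈ 𝒰, IsOpen U ∧ U.Nonempty) →
    𝒰.Pairwise Disjoint → 𝒰.Countable) ∧
  ¬ TopologicalSpace.SeparableSpace L

/-! A Δ-space stays a Δ-space along continuous injections, so it suffices to show that a Souslin
line is not a Δ-space. If `q` enumerates a countable dense set in a nonempty separable Baire T1
space without isolated points, the sets `{q k | k ≥ n}` are dense and decrease to `∅`; open
expansions of them would be dense open sets with empty intersection, which Baire forbids.

Such a subspace sits inside any nontrivial densely ordered conditionally complete linear order
(a Souslin line is one): the closure of a countable set without isolated points inside a compact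
interval `[a, b]`. Choose a strictly decreasing sequence in `(a, b)`, recurse into the gaps
between its consecutive terms, and collect the infima of all sequences so chosen; each of them is
the limit of the infima chosen in the gaps below it. -/

open Set Filter Topology TopologicalSpace

theorem IsDeltaSpace.of_continuous_injective {X Y : Type*} [TopologicalSpace X]
    [TopologicalSpace Y] {f : X → Y} (hf : Continuous f) (hinj : Function.Injective f)
    (hY : IsDeltaSpace Y) : IsDeltaSpace X := by
  intro D hD hempty
  obtain ⟨V, hVo, hVanti, hDV, hVempty⟩ := hY (fun n => f '' D n) (fun n => image_mono (hD n))
    (by rw [← hinj.injOn.image_iInter_eq, hempty, image_empty])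
  refine ⟨fun n => f ⁻¹' V n, fun n => (hVo n).preimage hf, fun n => preimage_mono (hVanti n),
    fun n => image_subset_iff.1 (hDV n), ?_⟩
  rw [← preimage_iInter, hVempty, preimage_empty]

theorem not_isDeltaSpace_of_dense_antitone {X : Type*} [TopologicalSpace X] [BaireSpace X]
    [Nonempty X] {D : ℕ → Set X} (hD : Antitone D) (hdense : ∀ n, Dense (D n))
    (hempty : ⋂ n, D n = ∅) : ¬ IsDeltaSpace X := by
  intro hX
  obtain ⟨V, hVo, -, hDV, hVempty⟩ := hX D (fun n => hD n.le_succ) hempty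
  have hV : Dense (⋂ n, V n) := dense_iInter_of_isOpen hVo fun n => (hdense n).mono (hDV n)
  simpa [hVempty] using hV.nonempty

theorem not_isDeltaSpace_of_separableSpace {X : Type*} [TopologicalSpace X] [T1Space X]
    [BaireSpace X] [SeparableSpace X] [PerfectSpace X] [Nonempty X] : ¬ IsDeltaSpace X := by
  obtain ⟨q, hq⟩ := exists_dense_seq X
  refine not_isDeltaSpace_of_dense_antitone (D := fun n => range q \ q '' Iio n)
    (fun m n hmn => sdiff_subset_sdiff_right (image_mono (Iio_subset_Iio hmn)))
    (fun n => hq.sdiff_finite ((finite_Iio n).image q)) ?_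
  refine eq_empty_of_forall_notMem fun x hx => ?_
  obtain ⟨i, rfl⟩ := (mem_iInter.1 hx 0).1
  exact (mem_iInter.1 hx (i + 1)).2 (mem_image_of_mem q (Nat.lt_succ_self i))

theorem Set.Countable.not_isDeltaSpace_of_preperfect {X : Type*} [TopologicalSpace X] [T2Space X]
    {Q : Set X} (hQ : Q.Countable) (hne : Q.Nonempty) (hperf : Preperfect Q)
    (hcpt : IsCompact (closure Q)) : ¬ IsDeltaSpace X := by
  intro hX
  have : CompactSpace (closure Q) := isCompact_iff_compactSpace.1 hcpt
  have : Countable Q := hQ.to_subtype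
  have : SeparableSpace (closure Q) :=
    .of_denseRange _ ((denseRange_inclusion_iff subset_closure).2 subset_rfl)
  have : PerfectSpace (closure Q) := perfectSpace_iff_forall_not_isolated.2 fun x =>
    nhds_ne_subtype_neBot_iff.2 (hperf.perfect_closure.acc x x.2)
  have : Nonempty (closure Q) := (hne.mono subset_closure).to_subtype
  exact not_isDeltaSpace_of_separableSpace (X := closure Q)
    (hX.of_continuous_injective continuous_subtype_val Subtype.val_injective)

theorem exists_strictAnti_mem_Ioo {L : Type*} [LinearOrder L] [DenselyOrdered L] {a b : L}
    (h : a < b) : ∃ d : ℕ → L, StrictAnti d ∧ ∀ k, d k ∈ Ioo a b := by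
  have : Nonempty (Ioo a b) := (nonempty_Ioo.2 h).to_subtype
  obtain ⟨d, hd⟩ := Nat.exists_strictAnti (Ioo a b)
  exact ⟨fun k => d k, fun _ _ hmn => hd hmn, fun k => (d k).2⟩

section ConditionallyCompleteLinearOrder

variable {L : Type*} [ConditionallyCompleteLinearOrder L] [TopologicalSpace L] [OrderTopology L]

theorem StrictAnti.ciInf_mem_Icc_lt_and_tendsto {d : ℕ → L} (hd : StrictAnti d) {a : L}
    (ha : ∀ k, a < d k) :
    ⨅ k, d k ∈ Icc a (d 0) ∧ (∀ k, ⨅ i, d i < d k) ∧ Tendsto d atTop (𝓝 (⨅ k, d k)) := by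
  have hbdd : BddBelow (range d) := ⟨a, forall_mem_range.2 fun k => (ha k).le⟩
  exact ⟨⟨le_ciInf fun k => (ha k).le, ciInf_le hbdd 0⟩,
    fun k => (ciInf_le hbdd (k + 1)).trans_lt (hd k.lt_succ_self),
    tendsto_atTop_ciInf hd.antitone hbdd⟩

theorem exists_countable_preperfect_subset_Icc [DenselyOrdered L] {a b : L} (hab : a < b) :
    ∃ Q ⊆ Icc a b, Q.Countable ∧ Q.Nonempty ∧ Preperfect Q := by
  choose! d hd_anti hd_mem using fun p : L × L => exists_strictAnti_mem_Ioo (a := p.1) (b := p.2)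
  let J : List ℕ → L × L := fun s => s.foldr (fun k p => (d p (k + 1), d p k)) (a, b)
  have hJ : ∀ s, a ≤ (J s).1 ∧ (J s).1 < (J s).2 ∧ (J s).2 ≤ b := by
    intro s
    induction s with
    | nil => exact ⟨le_rfl, hab, le_rfl⟩
    | cons k s ih =>
      obtain ⟨ha, hlt, hb⟩ := ih
      exact ⟨ha.trans (hd_mem _ hlt (k + 1)).1.le, hd_anti _ hlt k.lt_succ_self,
        (hd_mem _ hlt k).2.le.trans hb⟩
  let w : L × L → L := fun p => ⨅ k, d p k
  have hw : ∀ s, w (J s) ∈ Icc (J s).1 (J s).2 ∧ (∀ k, w (J s) < d (J s) k) ∧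
      Tendsto (d (J s)) atTop (𝓝 (w (J s))) := by
    intro s
    obtain ⟨hmem, hlt, hlim⟩ :=
      (hd_anti _ (hJ s).2.1).ciInf_mem_Icc_lt_and_tendsto fun k => (hd_mem _ (hJ s).2.1 k).1
    exact ⟨⟨hmem.1, hmem.2.trans (hd_mem _ (hJ s).2.1 0).2.le⟩, hlt, hlim⟩
  refine ⟨range (w ∘ J), ?_, countable_range _, range_nonempty _, ?_⟩
  · rintro _ ⟨s, rfl⟩
    exact ⟨(hJ s).1.trans (hw s).1.1, (hw s).1.2.trans (hJ s).2.2⟩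
  · rintro _ ⟨s, rfl⟩
    have hchild : ∀ k, w (J (k :: s)) ∈ Icc (d (J s) (k + 1)) (d (J s) k) :=
      fun k => (hw (k :: s)).1
    have hlim : Tendsto (fun k => w (J (k :: s))) atTop (𝓝 (w (J s))) :=
      tendsto_of_tendsto_of_tendsto_of_le_of_le ((hw s).2.2.comp (tendsto_add_atTop_nat 1))
        (hw s).2.2 (fun k => (hchild k).1) (fun k => (hchild k).2)
    rw [accPt_iff_frequently]
    refine hlim.frequently (Frequently.of_forall fun k => ⟨?_, mem_range_self (k :: s)⟩)
    exact ((hw s).2.1 (k + 1)).trans_le (hchild k).1 |>.ne'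

theorem not_isDeltaSpace_of_denselyOrdered [DenselyOrdered L] [Nontrivial L] :
    ¬ IsDeltaSpace L := by
  obtain ⟨a, b, hab⟩ := exists_pair_lt L
  obtain ⟨Q, hQab, hQc, hQne, hQ⟩ := exists_countable_preperfect_subset_Icc hab
  exact hQc.not_isDeltaSpace_of_preperfect hQne hQ
    (isCompact_Icc.of_isClosed_subset isClosed_closure (closure_minimal hQab isClosed_Icc))

end ConditionallyCompleteLinearOrder

open Classical in
noncomputable abbrev ConditionallyCompleteLinearOrder.ofExistsIsLUB {L : Type*} [LinearOrder L]
    [Nonempty L] (h : ∀ s : Set L, s.Nonempty → BddAbove s → ∃ x, IsLUB s x) :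
    ConditionallyCompleteLinearOrder L where
  __ := ‹LinearOrder L›
  __ := LinearOrder.toLattice
  sSup s := if hs : s.Nonempty ∧ BddAbove s then (h s hs.1 hs.2).choose else Classical.arbitrary L
  sInf s := if hs : s.Nonempty ∧ BddBelow s then
    (h (lowerBounds s) hs.2 hs.1.bddAbove_lowerBounds).choose else Classical.arbitrary L
  isLUB_csSup s hne hbdd := by
    rw [dif_pos ⟨hne, hbdd⟩]
    exact (h s hne hbdd).choose_spec
  isGLB_csInf s hne hbdd := by
    rw [dif_pos ⟨hne, hbdd⟩]
    exact isLUB_lowerBounds.1 (h _ hbdd hne.bddAbove_lowerBounds).choose_spec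
  csSup_of_not_bddAbove s hs := by
    rw [dif_neg fun h => hs h.2, dif_neg fun h => h.1.ne_empty rfl]
  csInf_of_not_bddBelow s hs := by
    rw [dif_neg fun h => hs h.2, dif_neg fun h => h.1.ne_empty rfl]

theorem IsSouslinLine.not_isDeltaSpace {L : Type*} [LinearOrder L] [TopologicalSpace L]
    [OrderTopology L] (hL : IsSouslinLine L) : ¬ IsDeltaSpace L := by
  obtain ⟨hdense, -, hmax, hlub, -, hsep⟩ := hL
  have : Nonempty L := not_isEmpty_iff.1 fun _ => hsep inferInstance
  let := ConditionallyCompleteLinearOrder.ofExistsIsLUB hlub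
  exact not_isDeltaSpace_of_denselyOrdered

theorem delta_space_has_no_souslin_line_subspace_general {X : Type u} [TopologicalSpace X]
    (hX : IsDeltaSpace X) :
    (∀ S : Set X, ∀ (L : Type v) [LinearOrder L] [TopologicalSpace L]
        [OrderTopology L], IsSouslinLine L → IsEmpty (S ≃ₜ L)) ∧
    (∀ (L : Type v) [LinearOrder L] [TopologicalSpace L] [OrderTopology L],
        IsSouslinLine L → ¬ IsDeltaSpace L) :=
  ⟨fun _ _ _ _ _ hL => ⟨fun f => hL.not_isDeltaSpace <|
      hX.of_continuous_injective (continuous_subtype_val.comp f.symm.continuous)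
        (Subtype.val_injective.comp f.symm.injective)⟩,
    fun _ _ _ _ hL => hL.not_isDeltaSpace⟩

/-- A locally compact, (countably) compact Δ-space contains no subspace
homeomorphic to a Souslin line; in particular a Souslin line (being a Baire
space partitioned into countably many dense subsets) is never a Δ-space. -/
theorem delta_space_has_no_souslin_line_subspace {X : Type u}
    [TopologicalSpace X] [LocallyCompactSpace X]
    (hcc : CompactSpace X ∨
      ∀ U : ℕ → Set X, (∀ n, IsOpen (U n)) → (⋃ n, U n) = Set.univ →
        ∃ F : Finset ℕ, (⋃ n ∈ F, U n) = Set.univ)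
    (hX : IsDeltaSpace X) :
    (∀ S : Set X, ∀ (L : Type v) [LinearOrder L] [TopologicalSpace L]
        [OrderTopology L], IsSouslinLine L → IsEmpty (S ≃ₜ L)) ∧
    (∀ (L : Type v) [LinearOrder L] [TopologicalSpace L] [OrderTopology L],
        IsSouslinLine L → ¬ IsDeltaSpace L) :=
  delta_space_has_no_souslin_line_subspace_general hX
end
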